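/- Let k be an algebraically closed field, let n ≥ 1, and let h₁, …, hₙ be polynomials in k[z₁, …, zₙ] such that for each i there is an integer dᵢ ≥ 1 with the total degree of hᵢ − zᵢ^{dᵢ} strictly less than dᵢ. Then the set of common zeros { z ∈ kⁿ : hᵢ(z) = 0 for all i } is finite (and nonempty). -/

import Mathlib

/-!
Each `hᵢ` is `Xᵢ ^ dᵢ` up to terms of lower total degree, so rewriting `Xᵢ ^ dᵢ` as
`hᵢ - (hᵢ - Xᵢ ^ dᵢ)` lowers degrees and shows that `k[X]` is spanned, as a module over
`k[h] = k[h₁, …, hₙ]`, by the finitely many monomials with exponents `eᵢ ≤ dᵢ`. Thus `k[X]` is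
integral over `k[h]`, and comparing transcendence degrees, the `hᵢ` are algebraically
independent. Integrality makes each `Xᵢ` a root of a monic polynomial over `k[h]`, whose
coefficients take the same values at all common zeros; so each coordinate of a common zero is
one of finitely many roots. Lying over the maximal ideal `(h₁, …, hₙ)` of `k[h] ≅ k[Y]` gives a
maximal ideal of `k[X]` containing every `hᵢ`, which by the Nullstellensatz is the ideal of a
common zero.
-/

open MvPolynomial Set Algebra

namespace MvPolynomial

variable {σ R : Type*}

theorem mem_of_forall_monomial_one_mem [CommSemiring R] {M : Submodule R (MvPolynomial σ R)}
    {p : MvPolynomial σ R} (hp : ∀ e ∈ p.support, monomial e 1 ∈ M) : p ∈ M := by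
  rw [p.as_sum]
  refine Submodule.sum_mem _ fun e he => ?_
  simpa [smul_monomial] using M.smul_mem (coeff e p) (hp e he)

section ReduceExponents

variable [CommRing R] {h : σ → MvPolynomial σ R} {d : σ → ℕ}

theorem mem_span_monomial_one_of_totalDegree_sub_X_pow_lt
    (hdeg : ∀ i, (h i - X i ^ d i).totalDegree < d i) (p : MvPolynomial σ R) :
    p ∈ Submodule.span (adjoin R (range h)) ((monomial · 1) '' {e | ∀ i, e i ≤ d i}) := by
  set M := Submodule.span (adjoin R (range h)) ((monomial · (1 : R)) '' {e | ∀ i, e i ≤ d i})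
  induction hN : p.totalDegree using Nat.strong_induction_on generalizing p with
  | _ N ih =>
  refine mem_of_forall_monomial_one_mem (M := M.restrictScalars R) fun e he => ?_
  change monomial e 1 ∈ M
  by_cases hsmall : ∀ i, e i ≤ d i
  · exact Submodule.subset_span ⟨e, hsmall, rfl⟩
  obtain ⟨i, hi⟩ := not_forall.1 hsmall
  obtain ⟨e, rfl⟩ : ∃ e', e' + Finsupp.single i (d i) = e :=
    ⟨_, tsub_add_cancel_of_le (Finsupp.single_le_iff.2 (not_le.1 hi).le)⟩
  have he_deg : (e + Finsupp.single i (d i)).degree ≤ N := hN ▸ le_totalDegree he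
  rw [map_add, Finsupp.degree_single] at he_deg
  have hdi : 0 < d i := (Nat.zero_le _).trans_lt (hdeg i)
  have hmon : (monomial e (1 : R)).totalDegree ≤ e.degree := totalDegree_monomial_le e 1
  have hX : X i ^ d i * monomial e (1 : R) = monomial (e + Finsupp.single i (d i)) 1 := by
    rw [X_pow_eq_monomial, monomial_mul, one_mul, add_comm]
  have hsplit : monomial (e + Finsupp.single i (d i)) (1 : R) =
      h i * monomial e 1 - (h i - X i ^ d i) * monomial e 1 := by
    linear_combination -hX
  rw [hsplit]
  refine sub_mem ?_ (ih _ ?_ _ rfl)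
  · exact Submodule.smul_mem M (⟨h i, subset_adjoin ⟨i, rfl⟩⟩ : adjoin R (range h))
      (ih _ (by omega) _ rfl)
  · have := totalDegree_mul (h i - X i ^ d i) (monomial e 1)
    have := hdeg i
    omega

theorem module_finite_adjoin_range_of_totalDegree_sub_X_pow_lt [Finite σ]
    (hdeg : ∀ i, (h i - X i ^ d i).totalDegree < d i) :
    Module.Finite (adjoin R (range h)) (MvPolynomial σ R) := by
  classical
  have hfin : {e : σ →₀ ℕ | ∀ i, e i ≤ d i}.Finite :=
    (Set.finite_Iic (Finsupp.equivFunOnFinite.symm d)).subset fun e he => Finsupp.le_def.2 he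
  exact ⟨Submodule.fg_def.2 ⟨_, hfin.image _, eq_top_iff.2 fun p _ =>
    mem_span_monomial_one_of_totalDegree_sub_X_pow_lt hdeg p⟩⟩

end ReduceExponents

theorem algebraicIndependent_of_isAlgebraic_adjoin_range [CommRing R] [IsDomain R] [Finite σ]
    (h : σ → MvPolynomial σ R) [Algebra.IsAlgebraic (adjoin R (range h)) (MvPolynomial σ R)] :
    AlgebraicIndependent R h :=
  (Algebra.IsAlgebraic.isTranscendenceBasis_of_lift_le_trdeg_of_finite R h (by simp)).1

theorem finite_setOf_forall_eval_eq_zero [CommRing R] [IsDomain R] [Finite σ]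
    (h : σ → MvPolynomial σ R) [Algebra.IsIntegral (adjoin R (range h)) (MvPolynomial σ R)] :
    {z : σ → R | ∀ i, eval z (h i) = 0}.Finite := by
  rcases Set.eq_empty_or_nonempty {z : σ → R | ∀ i, eval z (h i) = 0} with hZ | ⟨z₀, hz₀⟩
  · simp [hZ]
  set B := adjoin R (range h)
  set φ : B →ₐ[R] R := (aeval z₀).comp B.val
  have hφ : ∀ z : σ → R, (∀ i, eval z (h i) = 0) →
      (aeval (R := R) z).toRingHom.comp (algebraMap B _) = φ := by
    intro z hz
    have hB : (aeval z).comp B.val = φ := AlgHom.adjoin_ext <| by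
      rintro _ ⟨i, rfl⟩
      simp [φ, hz i, hz₀ i]
    rw [← hB]
    rfl
  choose p hp_monic hp_root using
    fun i => Algebra.IsIntegral.isIntegral (R := B) (X i : MvPolynomial σ R)
  refine (Set.Finite.pi fun i => Polynomial.finite_setOfPred_isRoot
    ((hp_monic i).map (φ : B →+* R)).ne_zero).subset fun z hz i _ => ?_
  have hroot := Polynomial.hom_eval₂ (p i) (algebraMap B _) (aeval (R := R) z).toRingHom (X i)
  rw [hp_root i, map_zero, hφ z hz] at hroot
  simpa [Polynomial.IsRoot, Polynomial.eval_map] using hroot.symm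

theorem nonempty_setOf_forall_eval_eq_zero [Field R] [IsAlgClosed R] [Finite σ]
    {h : σ → MvPolynomial σ R} (hind : AlgebraicIndependent R h)
    [Algebra.IsIntegral (adjoin R (range h)) (MvPolynomial σ R)] :
    {z : σ → R | ∀ i, eval z (h i) = 0}.Nonempty := by
  set B := adjoin R (range h)
  set φ : B →ₐ[R] R := (aeval 0).comp hind.aevalEquiv.symm.toAlgHom
  have hφ : Function.Surjective φ := fun c => ⟨algebraMap R B c, by simp [φ]⟩
  have hker : ∀ i, (⟨h i, subset_adjoin ⟨i, rfl⟩⟩ : B) ∈ RingHom.ker φ := by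
    intro i
    have hX : hind.aevalEquiv (X i) = ⟨h i, subset_adjoin ⟨i, rfl⟩⟩ :=
      Subtype.ext ((hind.algebraMap_aevalEquiv (X i)).trans (aeval_X h i))
    simp [φ, ← hX]
  have := RingHom.ker_isMaximal_of_surjective φ hφ
  have hinj : RingHom.ker (algebraMap B (MvPolynomial σ R)) = ⊥ :=
    (RingHom.injective_iff_ker_eq_bot _).1 Subtype.val_injective
  obtain ⟨Q, hQ, hQφ⟩ :=
    Ideal.exists_ideal_over_maximal_of_isIntegral (RingHom.ker φ) (hinj ▸ bot_le)
  obtain ⟨z, rfl⟩ := isMaximal_iff_eq_vanishingIdeal_singleton.1 hQ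
  exact ⟨z, fun i => by simpa [← hQφ, mem_vanishingIdeal_singleton_iff] using hker i⟩

end MvPolynomial

theorem common_zero_set_finite_of_monic_in_own_variable_general
    (k : Type*) [Field k] [IsAlgClosed k] (n : ℕ)
    (h : Fin n → MvPolynomial (Fin n) k)
    (hdeg : ∀ i : Fin n, ∃ d : ℕ, 1 ≤ d ∧ (h i - X i ^ d).totalDegree < d) :
    {z : Fin n → k | ∀ i : Fin n, eval z (h i) = 0}.Finite ∧
      {z : Fin n → k | ∀ i : Fin n, eval z (h i) = 0}.Nonempty := by
  choose d _ hd using hdeg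
  have := module_finite_adjoin_range_of_totalDegree_sub_X_pow_lt hd
  exact ⟨finite_setOf_forall_eval_eq_zero h,
    nonempty_setOf_forall_eval_eq_zero (algebraicIndependent_of_isAlgebraic_adjoin_range h)⟩

/-- The finiteness (and nonemptiness) of the common zero set underlying
Corollary 5.3 of the paper. -/
theorem common_zero_set_finite_of_monic_in_own_variable
    (k : Type*) [Field k] [IsAlgClosed k] (n : ℕ) (hn : 1 ≤ n)
    (h : Fin n → MvPolynomial (Fin n) k)
    (hdeg : ∀ i : Fin n, ∃ d : ℕ, 1 ≤ d ∧ (h i - X i ^ d).totalDegree < d) :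
    {z : Fin n → k | ∀ i : Fin n, eval z (h i) = 0}.Finite ∧
      {z : Fin n → k | ∀ i : Fin n, eval z (h i) = 0}.Nonempty :=
  common_zero_set_finite_of_monic_in_own_variable_general k n h hdeg
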